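/- arXiv:1609.04532 — 3 statements merged into one kernel-verified Lean document; each statement's English description precedes it below -/
import Mathlib

section
/- Let M be a finitely generated graded left module over a Λ-graded ℂ-algebra R. Then M is torsion if and only if there exists λ ∈ Λ such that M_μ = 0 for all μ ∈ λ + Λ⁺. -/
lemma common_point_of_translates (Λ : Type) [AddCommGroup Λ] [DecidableEq Λ]
    (P : AddSubmonoid Λ)
    (hdir : ∀ l₁ l₂ : Λ, ∃ μ : Λ, (∃ p ∈ P, μ = l₁ + p) ∧ ∃ p ∈ P, μ = l₂ + p)
    (s : Finset Λ) : ∃ ν : Λ, ∀ a ∈ s, ∃ q ∈ P, ν = a + q := by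
  induction s using Finset.induction_on with
  | empty => exact ⟨0, by simp⟩
  | @insert a s _ ih =>
    obtain ⟨ν, hν⟩ := ih
    obtain ⟨μ, ⟨q₀, hq₀, hμν⟩, ⟨q₁, hq₁, hμa⟩⟩ := hdir ν a
    refine ⟨μ, fun b hb => ?_⟩
    rcases Finset.mem_insert.mp hb with rfl | hb
    · exact ⟨q₁, hq₁, hμa⟩
    · obtain ⟨q, hq, hq'⟩ := hν b hb
      exact ⟨q + q₀, P.add_mem hq hq₀, by rw [hμν, hq', add_assoc]⟩

/-- Let `Λ` be a lattice (a finitely generated torsion-free abelian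
group), `Λ⁺ ⊆ Λ` a subsemigroup such that any two translates `λ₁ + Λ⁺`, `λ₂ + Λ⁺` meet
and `Λ⁺ ∩ (−Λ⁺) = {0}`.  Let `R` be a `Λ`-graded `ℂ`-algebra and `M` a finitely
generated graded left `R`-module.  Then `M` is torsion if and only if there exists
`λ ∈ Λ` with `M_μ = 0` for all `μ ∈ λ + Λ⁺`. -/
theorem fg_graded_module_torsion_iff
    (Λ : Type) [AddCommGroup Λ] [DecidableEq Λ]
    (hfg : AddGroup.FG Λ) [NoZeroSMulDivisors ℤ Λ]
    (P : AddSubmonoid Λ)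
    (hdir : ∀ l₁ l₂ : Λ, ∃ μ : Λ, (∃ p ∈ P, μ = l₁ + p) ∧ ∃ p ∈ P, μ = l₂ + p)
    (hpointed : ∀ x ∈ P, -x ∈ P → x = 0)
    (R : Type) [Ring R] [Algebra ℂ R]
    (𝒜 : Λ → Submodule ℂ R) [GradedRing 𝒜]
    (M : Type) [AddCommGroup M] [Module ℂ M] [Module R M] [IsScalarTower ℂ R M]
    (ℳ : Λ → Submodule ℂ M) [SetLike.GradedSMul 𝒜 ℳ] [DirectSum.Decomposition ℳ]
    -- `M` is finitely generated by homogeneous elements `m i ∈ ℳ (ν i)`: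
    (hFG : ∃ (p : ℕ) (ν : Fin p → Λ) (m : Fin p → M),
      (∀ i, m i ∈ ℳ (ν i)) ∧
      ∀ (l : Λ) (x : M), x ∈ ℳ l →
        ∃ r : Fin p → R, (∀ i, r i ∈ 𝒜 (l - ν i)) ∧ x = ∑ i, r i • m i) :
    -- `M` is torsion ↔ `ℳ μ` vanishes on a translated cone:
    (∀ m : M, ∃ l ∈ P, ∀ μ : Λ, (∃ p ∈ P, μ = l + p) → ∀ r ∈ 𝒜 μ, r • m = 0)
      ↔ ∃ l : Λ, ∀ μ : Λ, (∃ p ∈ P, μ = l + p) → ℳ μ = ⊥ := by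
  classical
  constructor
  · intro hy
    obtain ⟨p, ν, m, hm, hgen⟩ := hFG
    choose l hlP hl using hy
    obtain ⟨lam, hlam⟩ := common_point_of_translates Λ P hdir
      (Finset.image (fun i => ν i + l (m i)) Finset.univ)
    refine ⟨lam, ?_⟩
    rintro μ ⟨q, hq, rfl⟩
    rw [eq_bot_iff]
    intro x hx
    obtain ⟨r, hr, rfl⟩ := hgen _ x hx
    simp only [Submodule.mem_bot]
    refine Finset.sum_eq_zero fun i _ => ?_
    obtain ⟨qi, hqi, hqi'⟩ := hlam (ν i + l (m i))
      (Finset.mem_image_of_mem _ (Finset.mem_univ i))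
    exact hl (m i) (lam + q - ν i)
      ⟨qi + q, P.add_mem hqi hq, by rw [hqi']; abel⟩ _ (hr i)
  · rintro ⟨l, hl⟩ m
    obtain ⟨ν, hν⟩ := common_point_of_translates Λ P hdir
      (insert 0 ((DirectSum.decompose ℳ m).support.image (fun i => l - i)))
    obtain ⟨q₀, hq₀, hν0⟩ := hν 0 (Finset.mem_insert_self _ _)
    refine ⟨ν, by rw [hν0, zero_add]; exact hq₀, ?_⟩
    rintro μ ⟨q, hq, rfl⟩ r hr
    conv_lhs => rw [← DirectSum.sum_support_decompose ℳ m]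
    rw [Finset.smul_sum]
    refine Finset.sum_eq_zero fun i hi => ?_
    have hmem : r • (DirectSum.decompose ℳ m i : M) ∈ ℳ (ν + q + i) :=
      SetLike.GradedSMul.smul_mem hr (DirectSum.decompose ℳ m i).2
    obtain ⟨qi, hqi, hqi'⟩ := hν (l - i)
      (Finset.mem_insert_of_mem (Finset.mem_image_of_mem _ hi))
    have hbot := hl (ν + q + i) ⟨qi + q, P.add_mem hqi hq, by rw [hqi']; abel⟩
    rw [hbot, Submodule.mem_bot] at hmem
    exact hmem
end

section
/- The associated graded algebra of O(SL₂) with respect to the filtration (F_n), namely the ℤ-graded algebra ⊕_{n≥0} F_n/F_{n−2}, is isomorphic as a ℤ-graded ℂ-algebra to ℂ[a,b,c,d]/(ad − bc) with its standard grading (a, b, c, d in degree 1), via the map sending the class of a in F₁/F_{−1} to a, and similarly for b, c, d. -/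
open MvPolynomial

/-- `O(SL₂) = ℂ[a,b,c,d]/(ad − bc − 1)`, with `a = X 0`, `b = X 1`, `c = X 2`, `d = X 3`. -/
noncomputable abbrev OSL2 : Type :=
  MvPolynomial (Fin 4) ℂ ⧸
    (Ideal.span {(X 0 : MvPolynomial (Fin 4) ℂ) * X 3 - X 1 * X 2 - 1})

/-- The quotient map `ℂ[a,b,c,d] → O(SL₂)`. -/
noncomputable def mkSL : MvPolynomial (Fin 4) ℂ →ₐ[ℂ] OSL2 :=
  Ideal.Quotient.mkₐ ℂ _

/-- The Peter–Weyl filtration subspace `F_n ⊆ O(SL₂)`. -/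
noncomputable def Fdeg (n : ℤ) : Submodule ℂ OSL2 :=
  Submodule.span ℂ
    {x : OSL2 | ∃ k : Fin 4 → ℕ,
      ((∑ i, k i : ℕ) : ℤ) ≤ n ∧ ((∑ i, k i : ℕ) : ℤ) ≡ n [ZMOD 2] ∧
      x = mkSL (∏ i, X i ^ k i)}

/-- The `n`-th graded piece `F_n / F_{n-2}` of the associated graded algebra of
`O(SL₂)` for the Peter–Weyl filtration. -/
noncomputable abbrev GrPiece (n : ℕ) : Type :=
  (Fdeg (n : ℤ)) ⧸ (Submodule.comap (Fdeg (n : ℤ)).subtype (Fdeg ((n : ℤ) - 2)))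

/-- `ℂ[a,b,c,d]/(ad − bc)`, the homogeneous coordinate ring of `ℙ¹ × ℙ¹`. -/
noncomputable abbrev SegreRing : Type :=
  MvPolynomial (Fin 4) ℂ ⧸
    (Ideal.span {(X 0 : MvPolynomial (Fin 4) ℂ) * X 3 - X 1 * X 2})

/-- The quotient map `ℂ[a,b,c,d] → ℂ[a,b,c,d]/(ad − bc)`. -/
noncomputable def mkSegre : MvPolynomial (Fin 4) ℂ →ₐ[ℂ] SegreRing :=
  Ideal.Quotient.mkₐ ℂ _

/-- The `n`-th graded piece of `ℂ[a,b,c,d]/(ad − bc)` with its standard grading: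
the image of the degree-`n` homogeneous polynomials. -/
noncomputable def SegrePiece (n : ℕ) : Submodule ℂ SegreRing :=
  (homogeneousSubmodule (Fin 4) ℂ n).map mkSegre.toLinearMap

/-!
Write `δ = ad - bc`. Degree-`n` forms land in `F_n`, and `F_n` is `F_{n-2}` plus the image of the
degree-`n` forms, so these forms surject onto `F_n/F_{n-2}`, as they do onto the degree-`n` part of
`ℂ[a,b,c,d]/(δ)`; it remains to compare the kernels. If `p = fδ` is a form of degree `n`, then
`p = f_{n-2} δ ≡ f_{n-2}` modulo `δ - 1`, which lies in `F_{n-2}`. Conversely, if `p ≡ q` with `q`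
of degree `≤ n - 2`, write `p - q = f(δ - 1)`: since `ℂ[a,b,c,d]` is a domain, the top-degree part
of the right side is `f_top δ`, which forces `deg f < n`, and comparing degree-`n` parts gives
`p = (fδ)_n ∈ (δ)`.
-/
theorem LinearMap.exists_linearEquiv_apply_eq_of_ker_eq {R M N P : Type*} [Ring R]
    [AddCommGroup M] [AddCommGroup N] [AddCommGroup P] [Module R M] [Module R N] [Module R P]
    {f : M →ₗ[R] N} {g : M →ₗ[R] P} (hf : Function.Surjective f) (hg : Function.Surjective g)
    (h : ker f = ker g) : ∃ e : N ≃ₗ[R] P, ∀ x, e (f x) = g x :=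
  ⟨(f.quotKerEquivOfSurjective hf).symm ≪≫ₗ Submodule.quotEquivOfEq _ _ h ≪≫ₗ
      g.quotKerEquivOfSurjective hg, fun x => by simp⟩

namespace MvPolynomial

variable {σ R : Type*}

section CommSemiring

variable [CommSemiring R]

theorem homogeneousComponent_totalDegree_ne_zero {φ : MvPolynomial σ R} (hφ : φ ≠ 0) :
    homogeneousComponent φ.totalDegree φ ≠ 0 := by
  obtain ⟨s, hs, hdeg⟩ := Finset.exists_mem_eq_sup φ.support (support_nonempty.mpr hφ)
    fun s => s.sum fun _ e => e
  intro h0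
  have := congrArg (coeff s) h0
  rw [coeff_homogeneousComponent, if_pos, coeff_zero] at this
  · exact mem_support_iff.mp hs this
  · rw [totalDegree, hdeg, Finsupp.degree]
    rfl

theorem homogeneousComponent_mul_of_isHomogeneous {g : MvPolynomial σ R} {d : ℕ}
    (hg : g.IsHomogeneous d) (f : MvPolynomial σ R) (n : ℕ) :
    homogeneousComponent n (f * g) =
      if d ≤ n then homogeneousComponent (n - d) f * g else 0 := by
  induction f using MvPolynomial.induction_on' with
  | monomial u a =>
    have hu : (monomial u a).IsHomogeneous u.degree := isHomogeneous_monomial a rfl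
    rw [homogeneousComponent_of_mem (hu.mul hg), homogeneousComponent_of_mem hu]
    split_ifs <;> first | rfl | omega
  | add p q hp hq =>
    rw [add_mul, map_add, hp, hq, map_add, add_mul]
    split_ifs <;> simp

theorem homogeneousComponent_mul_mem_span_singleton {g : MvPolynomial σ R} {d : ℕ}
    (hg : g.IsHomogeneous d) (f : MvPolynomial σ R) (n : ℕ) :
    homogeneousComponent n (f * g) ∈ Ideal.span {g} := by
  rw [homogeneousComponent_mul_of_isHomogeneous hg]
  split_ifs
  · exact Ideal.mul_mem_left _ _ (Ideal.mem_span_singleton_self g)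
  · exact zero_mem _

end CommSemiring

section IsDomain

variable [CommRing R] [IsDomain R] {g : MvPolynomial σ R} {d : ℕ}

theorem homogeneousComponent_totalDegree_add_mul_sub_one_ne_zero (hg : g.IsHomogeneous d)
    (hg0 : g ≠ 0) (hd : 0 < d) {f : MvPolynomial σ R} (hf : f ≠ 0) :
    homogeneousComponent (f.totalDegree + d) (f * (g - 1)) ≠ 0 := by
  rw [mul_sub, mul_one, map_sub, homogeneousComponent_mul_of_isHomogeneous hg, if_pos (by omega),
    Nat.add_sub_cancel, homogeneousComponent_eq_zero (f.totalDegree + d) f (by omega), sub_zero]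
  exact mul_ne_zero (homogeneousComponent_totalDegree_ne_zero hf) hg0

theorem mem_span_singleton_of_sub_mem_span_singleton_sub_one (hg : g.IsHomogeneous d)
    (hg0 : g ≠ 0) (hd : 0 < d) {p q : MvPolynomial σ R} {n : ℕ} (hp : p.IsHomogeneous n)
    (hq : ∀ j, n ≤ j → homogeneousComponent j q = 0) (hpq : p - q ∈ Ideal.span {g - 1}) :
    p ∈ Ideal.span {g} := by
  obtain ⟨f, hf⟩ := Ideal.mem_span_singleton'.mp hpq
  have hcomp (j : ℕ) : homogeneousComponent j (f * (g - 1)) =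
      homogeneousComponent j p - homogeneousComponent j q := by
    rw [hf, map_sub]
  have hfn : homogeneousComponent n f = 0 := by
    rcases eq_or_ne f 0 with rfl | hf0
    · exact map_zero _
    refine homogeneousComponent_eq_zero _ _ (not_le.mp fun hle => ?_)
    refine homogeneousComponent_totalDegree_add_mul_sub_one_ne_zero hg hg0 hd hf0 ?_
    rw [hcomp, homogeneousComponent_of_mem hp, if_neg (by omega), hq _ (by omega), sub_zero]
  have hpn : p = homogeneousComponent n (f * g) := by
    have := hcomp n
    rw [mul_sub, mul_one, map_sub, hfn, sub_zero, homogeneousComponent_of_mem hp, if_pos rfl,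
      hq n le_rfl, sub_zero] at this
    exact this.symm
  exact hpn ▸ homogeneousComponent_mul_mem_span_singleton hg f n

end IsDomain

end MvPolynomial


noncomputable def monomialSpan (N : ℤ) : Submodule ℂ (MvPolynomial (Fin 4) ℂ) :=
  Submodule.span ℂ
    {p | ∃ k : Fin 4 → ℕ,
      ((∑ i, k i : ℕ) : ℤ) ≤ N ∧ ((∑ i, k i : ℕ) : ℤ) ≡ N [ZMOD 2] ∧ p = ∏ i, X i ^ k i}

theorem Fdeg_eq_map_monomialSpan (N : ℤ) : Fdeg N = (monomialSpan N).map mkSL.toLinearMap := by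
  rw [Fdeg, monomialSpan, Submodule.map_span]
  congr 1
  ext x
  constructor
  · rintro ⟨k, hle, hmod, rfl⟩
    exact ⟨_, ⟨k, hle, hmod, rfl⟩, rfl⟩
  · rintro ⟨p, ⟨k, hle, hmod, rfl⟩, rfl⟩
    exact ⟨k, hle, hmod, rfl⟩

theorem mem_monomialSpan_of_isHomogeneous {p : MvPolynomial (Fin 4) ℂ} {n : ℕ}
    (hp : p.IsHomogeneous n) : p ∈ monomialSpan n := by
  induction hp using IsWeightedHomogeneous.induction_on with
  | zero => exact zero_mem _
  | add p q _ _ hp hq => exact add_mem hp hq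
  | monomial d r hd =>
    have hsum : ∑ i, d i = n := by
      rw [← Finsupp.degree_eq_sum, Finsupp.degree_eq_weight_one]
      exact hd
    rw [monomial_eq, Finsupp.prod_fintype _ _ fun _ => pow_zero _, ← smul_eq_C_mul]
    exact Submodule.smul_mem _ _ (Submodule.subset_span ⟨d, by rw [hsum], by rw [hsum], rfl⟩)

theorem homogeneousComponent_eq_zero_of_mem_monomialSpan {N : ℤ} {q : MvPolynomial (Fin 4) ℂ}
    (hq : q ∈ monomialSpan N) {j : ℕ} (hj : N < j) : homogeneousComponent j q = 0 := by
  induction hq using Submodule.span_induction with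
  | mem x hx =>
    obtain ⟨k, hle, -, rfl⟩ := hx
    have hk : (∏ i, X i ^ k i : MvPolynomial (Fin 4) ℂ).IsHomogeneous (∑ i, k i) :=
      IsHomogeneous.prod _ _ _ fun i _ => isHomogeneous_X_pow i (k i)
    rw [homogeneousComponent_of_mem hk, if_neg (by omega)]
  | zero => exact map_zero _
  | add x y _ _ hx hy => rw [map_add, hx, hy, add_zero]
  | smul c x _ hx => rw [map_smul, hx, smul_zero]

theorem monomialSpan_le_sup (n : ℕ) :
    monomialSpan n ≤ monomialSpan (n - 2) ⊔ homogeneousSubmodule (Fin 4) ℂ n := by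
  refine Submodule.span_le.mpr ?_
  rintro _ ⟨k, hle, hmod, rfl⟩
  rcases eq_or_ne (∑ i, k i) n with hn | hn
  · refine Submodule.mem_sup_right ((mem_homogeneousSubmodule _ _).mpr ?_)
    exact hn ▸ IsHomogeneous.prod _ _ _ fun i _ => isHomogeneous_X_pow i (k i)
  · refine Submodule.mem_sup_left (Submodule.subset_span ⟨k, ?_, ?_, rfl⟩) <;>
      simp only [Int.ModEq] at * <;> omega

noncomputable def detPoly : MvPolynomial (Fin 4) ℂ := X 0 * X 3 - X 1 * X 2

theorem isHomogeneous_detPoly : detPoly.IsHomogeneous 2 :=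
  ((isHomogeneous_X ℂ 0).mul (isHomogeneous_X ℂ 3)).sub
    ((isHomogeneous_X ℂ 1).mul (isHomogeneous_X ℂ 2))

theorem detPoly_ne_zero : detPoly ≠ 0 := fun h => by
  simpa [detPoly] using congrArg (eval fun i => if i = 0 ∨ i = 3 then (1 : ℂ) else 0) h

theorem mkSL_eq_mkSL_iff {p q : MvPolynomial (Fin 4) ℂ} :
    mkSL p = mkSL q ↔ p - q ∈ Ideal.span {detPoly - 1} :=
  Ideal.Quotient.eq

theorem mkSegre_eq_zero_iff {p : MvPolynomial (Fin 4) ℂ} :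
    mkSegre p = 0 ↔ p ∈ Ideal.span {detPoly} :=
  Ideal.Quotient.eq_zero_iff_mem

theorem mkSL_mem_Fdeg {p : MvPolynomial (Fin 4) ℂ} {n : ℕ} (hp : p.IsHomogeneous n) :
    mkSL p ∈ Fdeg n := by
  rw [Fdeg_eq_map_monomialSpan]
  exact Submodule.mem_map_of_mem (mem_monomialSpan_of_isHomogeneous hp)

theorem mkSL_mem_Fdeg_sub_two_iff {p : MvPolynomial (Fin 4) ℂ} {n : ℕ}
    (hp : p.IsHomogeneous n) : mkSL p ∈ Fdeg (n - 2) ↔ mkSegre p = 0 := by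
  rw [mkSegre_eq_zero_iff]
  constructor
  · intro hmem
    rw [Fdeg_eq_map_monomialSpan] at hmem
    obtain ⟨q, hq, hqp⟩ := hmem
    exact mem_span_singleton_of_sub_mem_span_singleton_sub_one isHomogeneous_detPoly
      detPoly_ne_zero two_pos hp
      (fun j hj => homogeneousComponent_eq_zero_of_mem_monomialSpan hq (by omega))
      (mkSL_eq_mkSL_iff.mp hqp.symm)
  · intro hmem
    obtain ⟨f, rfl⟩ := Ideal.mem_span_singleton'.mp hmem
    rw [← homogeneousComponent_eq_self hp,
      homogeneousComponent_mul_of_isHomogeneous isHomogeneous_detPoly]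
    split_ifs with h2
    · have hmk : mkSL (homogeneousComponent (n - 2) f * detPoly) =
          mkSL (homogeneousComponent (n - 2) f) :=
        mkSL_eq_mkSL_iff.mpr
          (Ideal.mem_span_singleton'.mpr ⟨homogeneousComponent (n - 2) f, by ring⟩)
      rw [hmk, show (n : ℤ) - 2 = ((n - 2 : ℕ) : ℤ) by omega]
      exact mkSL_mem_Fdeg (homogeneousComponent_isHomogeneous _ _)
    · rw [map_zero]
      exact zero_mem _

theorem Fdeg_le_sup (n : ℕ) :
    Fdeg n ≤ Fdeg (n - 2) ⊔ (homogeneousSubmodule (Fin 4) ℂ n).map mkSL.toLinearMap := by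
  rw [Fdeg_eq_map_monomialSpan, Fdeg_eq_map_monomialSpan, ← Submodule.map_sup]
  exact Submodule.map_mono (monomialSpan_le_sup n)

noncomputable def toSegrePiece (n : ℕ) : homogeneousSubmodule (Fin 4) ℂ n →ₗ[ℂ] SegrePiece n :=
  mkSegre.toLinearMap.submoduleMap _

noncomputable def toGrPiece (n : ℕ) : homogeneousSubmodule (Fin 4) ℂ n →ₗ[ℂ] GrPiece n :=
  (Submodule.mkQ _).comp <| (mkSL.toLinearMap.comp (Submodule.subtype _)).codRestrict
    (Fdeg n) fun p => mkSL_mem_Fdeg p.2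

theorem toSegrePiece_surjective (n : ℕ) : Function.Surjective (toSegrePiece n) :=
  LinearMap.submoduleMap_surjective _ _

theorem toGrPiece_surjective (n : ℕ) : Function.Surjective (toGrPiece n) := by
  intro y
  obtain ⟨⟨x, hx⟩, rfl⟩ := Submodule.Quotient.mk_surjective _ y
  obtain ⟨y, hy, _, ⟨p, hp, rfl⟩, rfl⟩ := Submodule.mem_sup.mp (Fdeg_le_sup n hx)
  refine ⟨⟨p, hp⟩, (Submodule.Quotient.eq _).mpr ?_⟩
  show mkSL p - (y + mkSL p) ∈ Fdeg (n - 2)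
  rw [sub_add_cancel_right]
  exact neg_mem hy

theorem ker_toSegrePiece_eq_ker_toGrPiece (n : ℕ) :
    LinearMap.ker (toSegrePiece n) = LinearMap.ker (toGrPiece n) := by
  ext ⟨p, hp⟩
  rw [LinearMap.mem_ker, LinearMap.mem_ker, toGrPiece, LinearMap.comp_apply, Submodule.mkQ_apply,
    Submodule.Quotient.mk_eq_zero, Submodule.mem_comap]
  exact Subtype.ext_iff.trans (mkSL_mem_Fdeg_sub_two_iff hp).symm

/-- The associated graded algebra `⊕_{n≥0} F_n/F_{n−2}` of `O(SL₂)`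
is isomorphic, as a `ℤ`-graded `ℂ`-algebra, to `ℂ[a,b,c,d]/(ad − bc)` with its standard
grading, via the map sending (for each homogeneous polynomial `p` of degree `n`) the
class of `p` in `ℂ[a,b,c,d]/(ad−bc)` to the class of `p` in `F_n/F_{n-2}`; in
particular the class of `a` in degree `1` goes to the class of `a`, and similarly
for `b`, `c`, `d`.  (Compatibility with multiplication of homogeneous classes is
automatic from this description, since both sides are presented by `ℂ[a,b,c,d]`.) -/
theorem associatedGraded_OSL2_iso :
    ∀ n : ℕ, ∃ e : SegrePiece n ≃ₗ[ℂ] GrPiece n,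
      ∀ (p : MvPolynomial (Fin 4) ℂ) (hp : p ∈ homogeneousSubmodule (Fin 4) ℂ n)
        (hmem : mkSL p ∈ Fdeg (n : ℤ)),
        e ⟨mkSegre p, Submodule.mem_map_of_mem hp⟩
          = Submodule.Quotient.mk ⟨mkSL p, hmem⟩ := by
  intro n
  obtain ⟨e, he⟩ := LinearMap.exists_linearEquiv_apply_eq_of_ker_eq (toSegrePiece_surjective n)
    (toGrPiece_surjective n) (ker_toSegrePiece_eq_ker_toGrPiece n)
  exact ⟨e, fun p hp _ => he ⟨p, hp⟩⟩
end

section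
/- The ℂ-algebra homomorphism ℂ[A,B,C,D] → O(SL₂)[z] defined by A ↦ az, B ↦ bz, C ↦ cz, D ↦ dz is injective, its image is exactly the Rees algebra ⊕_{n≥0} F_n z^n ⊆ O(SL₂)[z], and it sends AD − BC to z². In other words, the Vinberg semigroup of SL₂ is the semigroup Mat₂ of 2×2 matrices, and under this identification the abelianization map corresponds to the determinant. -/
/-!
Substituting `X i ↦ g i • z` sends a homogeneous polynomial `q` of degree `n` to `q(g) • zⁿ`, so
the `n`-th coefficient of the image of `p` is the image of its degree-`n` homogeneous component.
The image is therefore the Rees algebra of the filtration of `O(SL₂)` by the images of homogeneous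
polynomials of degree `n`, which is `F_n` because a monomial of degree `n - 2t` equals
`monomial · (ad - bc)ᵗ` in `O(SL₂)`. For injectivity: if `p` maps to zero, then `p` vanishes at
`z • g` for all `z ∈ ℂ` and `g ∈ SL₂(ℂ)`, that is (taking square roots of determinants) on all of
`GL₂(ℂ)`, so `p · (ad - bc)` vanishes on `Mat₂(ℂ)` and hence is zero.
-/

open MvPolynomial

/-- The map `ℂ[A,B,C,D] → O(SL₂)[z]`, `A ↦ az, B ↦ bz, C ↦ cz, D ↦ dz`. -/
noncomputable def vinbergMap : MvPolynomial (Fin 4) ℂ →ₐ[ℂ] Polynomial OSL2 :=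
  aeval (fun i : Fin 4 => Polynomial.C (mkSL (X i)) * Polynomial.X)

namespace MvPolynomial

variable {σ R A : Type*} [CommSemiring R] [CommSemiring A] [Algebra R A] (g : σ → A)

theorem IsHomogeneous.aeval_C_mul_X {q : MvPolynomial σ R} {n : ℕ} (hq : q.IsHomogeneous n) :
    MvPolynomial.aeval (fun i => Polynomial.C (g i) * Polynomial.X) q =
      Polynomial.C (MvPolynomial.aeval g q) * Polynomial.X ^ n := by
  induction hq using IsWeightedHomogeneous.induction_on with
  | zero => simp
  | add p q _ _ hp hq => simp only [map_add, hp, hq, add_mul]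
  | monomial d r hr =>
    rw [← hr]
    simp [aeval_monomial, Finsupp.prod, mul_pow, Finset.prod_mul_distrib, Finset.prod_pow_eq_pow_sum,
      Finsupp.weight_apply, Finsupp.sum, Polynomial.algebraMap_apply, mul_assoc]

theorem coeff_aeval_C_mul_X (p : MvPolynomial σ R) (n : ℕ) :
    (aeval (fun i => Polynomial.C (g i) * Polynomial.X) p).coeff n =
      aeval g (homogeneousComponent n p) := by
  induction p using MvPolynomial.induction_on' with
  | monomial d r =>
    have hd : (monomial d r).IsHomogeneous d.degree := isHomogeneous_monomial r rfl
    rw [hd.aeval_C_mul_X, Polynomial.coeff_C_mul_X_pow, homogeneousComponent_of_mem hd]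
    split_ifs <;> simp_all
  | add p q hp hq => simp only [map_add, Polynomial.coeff_add, hp, hq]

theorem exists_aeval_C_mul_X_eq_iff (P : Polynomial A) :
    (∃ p : MvPolynomial σ R, aeval (fun i => Polynomial.C (g i) * Polynomial.X) p = P) ↔
      ∀ n, P.coeff n ∈ (homogeneousSubmodule σ R n).map (aeval g).toLinearMap := by
  constructor
  · rintro ⟨p, rfl⟩ n
    exact ⟨_, homogeneousComponent_mem n p, (coeff_aeval_C_mul_X g p n).symm⟩
  · intro hP
    choose q hq hqP using hP
    refine ⟨∑ n ∈ P.support, q n, ?_⟩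
    conv_rhs => rw [P.as_sum_support_C_mul_X_pow]
    simp only [map_sum]
    refine Finset.sum_congr rfl fun n _ => ?_
    rw [(hq n).aeval_C_mul_X g, ← hqP n]
    rfl

end MvPolynomial

local notation "Δ" => (X 0 * X 3 - X 1 * X 2 : MvPolynomial (Fin 4) ℂ)

lemma isHomogeneous_det : IsHomogeneous Δ 2 :=
  ((isHomogeneous_X ℂ 0).mul (isHomogeneous_X ℂ 3)).sub
    ((isHomogeneous_X ℂ 1).mul (isHomogeneous_X ℂ 2))

lemma mkSL_det : mkSL Δ = 1 := by
  rw [← sub_eq_zero, ← map_one mkSL, ← map_sub, mkSL, Ideal.Quotient.mkₐ_eq_mk,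
    Ideal.Quotient.eq_zero_iff_mem]
  exact Ideal.subset_span rfl

lemma Fdeg_natCast_eq_map (n : ℕ) :
    Fdeg n = (homogeneousSubmodule (Fin 4) ℂ n).map mkSL.toLinearMap := by
  apply le_antisymm
  · rw [Fdeg, Submodule.span_le]
    rintro _ ⟨k, hle, hmod, rfl⟩
    obtain ⟨t, ht⟩ := hmod.dvd
    lift t to ℕ using by omega
    have hn : n = ∑ i, k i + 2 * t := by omega
    refine ⟨(∏ i, X i ^ k i) * Δ ^ t, ?_, by simp [mkSL_det]⟩
    rw [SetLike.mem_coe, mem_homogeneousSubmodule, hn]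
    exact (IsHomogeneous.prod _ _ _ fun i _ => isHomogeneous_X_pow i (k i)).mul
      (isHomogeneous_det.pow t)
  · rintro _ ⟨q, hq, rfl⟩
    induction hq using IsWeightedHomogeneous.induction_on with
    | zero => simp
    | add p q _ _ hp hq => simpa using add_mem hp hq
    | monomial d r hr =>
      rw [monomial_eq, Finsupp.prod_fintype _ _ fun i => pow_zero _, ← smul_eq_C_mul, map_smul]
      refine Submodule.smul_mem _ r (Submodule.subset_span ?_)
      refine ⟨d, ?_, ?_, rfl⟩ <;> simp [← hr, Finsupp.weight_apply, Finsupp.sum_fintype]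

lemma eval_smul_eq_zero_of_vinbergMap_eq_zero {p : MvPolynomial (Fin 4) ℂ}
    (hp : vinbergMap p = 0) {v : Fin 4 → ℂ} (hv : v 0 * v 3 - v 1 * v 2 = 1) (z : ℂ) :
    eval (z • v) p = 0 := by
  let φ : OSL2 →ₐ[ℂ] ℂ := Ideal.Quotient.liftₐ _ (aeval v) fun q hq => by
    obtain ⟨c, rfl⟩ := Ideal.mem_span_singleton'.mp hq
    simp [hv]
  have hφ :
      (Polynomial.aeval z).comp ((Polynomial.mapAlgHom φ).comp vinbergMap) = aeval (z • v) :=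
    algHom_ext fun i => by
      simp only [AlgHom.comp_apply, vinbergMap, aeval_X, Polynomial.coe_mapAlgHom,
        Polynomial.map_C, Polynomial.map_X, map_mul, Polynomial.aeval_C, Polynomial.aeval_X]
      simp [φ, mkSL, mul_comm]
  have := DFunLike.congr_fun hφ p
  rwa [AlgHom.comp_apply, AlgHom.comp_apply, hp, map_zero, map_zero, eq_comm] at this

lemma eval_eq_zero_of_vinbergMap_eq_zero {p : MvPolynomial (Fin 4) ℂ} (hp : vinbergMap p = 0)
    {w : Fin 4 → ℂ} (hw : eval w Δ ≠ 0) : eval w p = 0 := by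
  obtain ⟨z, hz⟩ := IsAlgClosed.exists_pow_nat_eq (eval w Δ) two_pos
  have hz0 : z ≠ 0 := by rintro rfl; simp_all
  have hv : (z⁻¹ • w) 0 * (z⁻¹ • w) 3 - (z⁻¹ • w) 1 * (z⁻¹ • w) 2 = 1 := by
    simp only [Pi.smul_apply, smul_eq_mul]
    field_simp
    simpa [eq_comm] using hz
  simpa [smul_inv_smul₀ hz0] using eval_smul_eq_zero_of_vinbergMap_eq_zero hp hv z

lemma vinbergMap_injective : Function.Injective vinbergMap := by
  refine (injective_iff_map_eq_zero _).mpr fun p hp => ?_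
  have hpΔ : p * Δ = 0 := MvPolynomial.funext fun w => by
    by_cases hw : eval w Δ = 0
    · simp [hw]
    · simp [eval_eq_zero_of_vinbergMap_eq_zero hp hw]
  refine (mul_eq_zero.mp hpΔ).resolve_right fun h => ?_
  simpa using congrArg (eval ![1, 0, 0, 1]) h

/-- The homomorphism `ℂ[A,B,C,D] → O(SL₂)[z]` defined by `A ↦ az`,
`B ↦ bz`, `C ↦ cz`, `D ↦ dz` is injective, its image is exactly the Rees algebra
`⊕_{n≥0} F_n z^n` (the polynomials whose `n`-th coefficient lies in `F_n`), and it
sends `AD − BC` to `z²`.  In other words the Vinberg semigroup of `SL₂` is the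
semigroup `Mat₂` of `2×2` matrices, and under this identification the abelianization
map corresponds to the determinant. -/
theorem vinberg_SL2 :
    Function.Injective vinbergMap
      ∧ (∀ p : Polynomial OSL2,
          (∃ x, vinbergMap x = p) ↔ ∀ n : ℕ, p.coeff n ∈ Fdeg (n : ℤ))
      ∧ vinbergMap ((X 0 : MvPolynomial (Fin 4) ℂ) * X 3 - X 1 * X 2)
          = Polynomial.X ^ 2 := by
  have hmk : aeval (fun i => mkSL (X i)) = mkSL := (aeval_unique mkSL).symm
  refine ⟨vinbergMap_injective, fun P => ?_, ?_⟩
  · simp_rw [vinbergMap, exists_aeval_C_mul_X_eq_iff, hmk, Fdeg_natCast_eq_map]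
  · rw [vinbergMap, isHomogeneous_det.aeval_C_mul_X, hmk, mkSL_det, map_one, one_mul]
end
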